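/- The set S̄ of wffs over a set S of sentence symbols is freely generated from S by the five formula-building operations ε¬, ε∧, ε∨, ε→, ε↔ on the set U of all expressions: S̄ is generated from S by these operations, each operation is injective on S̄ (or on pairs from S̄), their ranges on S̄ are pairwise disjoint, and these ranges are disjoint from S. -/

import Mathlib

/-!
Counting `(` as `+1` and `)` as `-1`, every wff has balance `0` while each of its proper
nonempty prefixes has positive balance, so no wff is a proper prefix of another. Hence if
`(α □ β) = (α' □' β')` with `α`, `α'` wffs, one of `α`, `α'` is a prefix of the other, which
forces `α = α'` and then `□ = □'`, `β = β'`. The other disjointness claims are read off the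
first two symbols. Generation and minimality follow once the wffs, defined through construction
sequences, are identified with the inductively generated expressions `Wff`.
-/

/-- Symbols of the language of sentential logic: parentheses, the five
connectives, and sentence symbols `A_n`. -/
inductive SLSym : Type
  | lpar | rpar | neg | conj | disj | imp | iff
  | ss (n : ℕ)
deriving DecidableEq

/-- An expression is a finite sequence of symbols. -/
abbrev Expr := List SLSym

/-- The formula-building operation `ε¬(α) = (¬α)`. -/
def eNeg (a : Expr) : Expr := SLSym.lpar :: SLSym.neg :: a ++ [SLSym.rpar]

/-- The formula-building operation `ε□(α, β) = (α □ β)` for a binary connective `□`. -/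
def eBin (c : SLSym) (a b : Expr) : Expr := SLSym.lpar :: a ++ c :: b ++ [SLSym.rpar]

/-- The four binary connectives. -/
def binSyms : List SLSym := [SLSym.conj, SLSym.disj, SLSym.imp, SLSym.iff]

/-- `l` is a construction sequence: each entry is a sentence symbol, or `ε¬`
of an earlier entry, or `ε□` of two earlier entries. -/
def IsCS (l : List Expr) : Prop :=
  ∀ i < l.length,
    (∃ n, l.getD i [] = [SLSym.ss n]) ∨
    (∃ j < i, l.getD i [] = eNeg (l.getD j [])) ∨
    (∃ c ∈ binSyms, ∃ j < i, ∃ k < i,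
      l.getD i [] = eBin c (l.getD j []) (l.getD k []))

/-- A well-formed formula is the last entry of some construction sequence. -/
def IsWff (a : Expr) : Prop := ∃ l : List Expr, IsCS l ∧ l.getLast? = some a

/-- `S̄`: the set of wffs all of whose sentence symbols lie in `S`. -/
def Sbar (S : Set ℕ) : Set Expr := {a | IsWff a ∧ ∀ n, SLSym.ss n ∈ a → n ∈ S}

/-- A construction sequence is `S`-based if every sentence symbol occurring in
any of its entries belongs to `S`. -/
def SBased (S : Set ℕ) (l : List Expr) : Prop :=
  IsCS l ∧ ∀ e ∈ l, ∀ n, SLSym.ss n ∈ e → n ∈ S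

/-- Truth tables of the binary connectives (`true` = T, `false` = F). -/
def binEval : SLSym → Bool → Bool → Bool
  | SLSym.conj, a, b => a && b
  | SLSym.disj, a, b => a || b
  | SLSym.imp, a, b => !a || b
  | SLSym.iff, a, b => a == b
  | _, _, _ => false

/-- `t` is an associated sequence of truth values for the `S`-based
construction sequence `l`, determined by the truth assignment `v`. -/
def IsAssocTV (S : Set ℕ) (v : {n : ℕ // n ∈ S} → Bool)
    (l : List Expr) (t : List Bool) : Prop :=
  t.length = l.length ∧
  ∀ i < l.length,
    (∃ n, ∃ hn : n ∈ S, l.getD i [] = [SLSym.ss n] ∧ t.getD i false = v ⟨n, hn⟩) ∨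
    (∃ j < i, l.getD i [] = eNeg (l.getD j []) ∧
      t.getD i false = !(t.getD j false)) ∨
    (∃ c ∈ binSyms, ∃ j < i, ∃ k < i,
      l.getD i [] = eBin c (l.getD j []) (l.getD k []) ∧
      t.getD i false = binEval c (t.getD j false) (t.getD k false))

/-- The sentence symbols of `S`, as a set of expressions. -/
def Sexprs (S : Set ℕ) : Set Expr := {e | ∃ n ∈ S, e = [SLSym.ss n]}

/-- A set of expressions is closed under the five formula-building operations. -/
def OpClosed (D : Set Expr) : Prop :=
  (∀ a ∈ D, eNeg a ∈ D) ∧ (∀ c ∈ binSyms, ∀ a ∈ D, ∀ b ∈ D, eBin c a b ∈ D)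

inductive Wff : Expr → Prop
  | sym (n : ℕ) : Wff [SLSym.ss n]
  | neg {a : Expr} : Wff a → Wff (eNeg a)
  | bin {c : SLSym} {a b : Expr} : c ∈ binSyms → Wff a → Wff b → Wff (eBin c a b)

lemma Wff.ne_nil {a : Expr} (h : Wff a) : a ≠ [] := by
  cases h <;> simp [eNeg, eBin]

def IsCSStep (l : List Expr) (i : ℕ) : Prop :=
  (∃ n, l.getD i [] = [SLSym.ss n]) ∨
  (∃ j < i, l.getD i [] = eNeg (l.getD j [])) ∨
  (∃ c ∈ binSyms, ∃ j < i, ∃ k < i, l.getD i [] = eBin c (l.getD j []) (l.getD k []))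

namespace IsCSStep

lemma append_right {l₁ : List Expr} {i : ℕ} (h : IsCSStep l₁ i) (hi : i < l₁.length)
    (l₂ : List Expr) : IsCSStep (l₁ ++ l₂) i := by
  have get : ∀ j ≤ i, (l₁ ++ l₂).getD j [] = l₁.getD j [] := fun j hj =>
    List.getD_append _ _ _ _ (by omega)
  rcases h with ⟨n, hn⟩ | ⟨j, hj, he⟩ | ⟨c, hc, j, hj, k, hk, he⟩
  · exact Or.inl ⟨n, by rw [get i le_rfl, hn]⟩
  · exact Or.inr (Or.inl ⟨j, hj, by rw [get i le_rfl, get j hj.le, he]⟩)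
  · exact Or.inr (Or.inr ⟨c, hc, j, hj, k, hk,
      by rw [get i le_rfl, get j hj.le, get k hk.le, he]⟩)

lemma append_left {l₂ : List Expr} {i : ℕ} (h : IsCSStep l₂ i) (l₁ : List Expr) :
    IsCSStep (l₁ ++ l₂) (l₁.length + i) := by
  have get : ∀ j, (l₁ ++ l₂).getD (l₁.length + j) [] = l₂.getD j [] := fun j => by
    rw [List.getD_append_right _ _ _ _ (by omega), Nat.add_sub_cancel_left]
  rcases h with ⟨n, hn⟩ | ⟨j, hj, he⟩ | ⟨c, hc, j, hj, k, hk, he⟩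
  · exact Or.inl ⟨n, by rw [get, hn]⟩
  · exact Or.inr (Or.inl ⟨l₁.length + j, by omega, by rw [get, get, he]⟩)
  · exact Or.inr (Or.inr ⟨c, hc, l₁.length + j, by omega, l₁.length + k, by omega,
      by rw [get, get, get, he]⟩)

end IsCSStep

namespace IsCS

lemma append {l₁ l₂ : List Expr} (h₁ : IsCS l₁) (h₂ : IsCS l₂) :
    IsCS (l₁ ++ l₂) := by
  intro i hi
  rcases lt_or_ge i l₁.length with h | h
  · exact IsCSStep.append_right (h₁ i h) h l₂
  · obtain ⟨i, rfl⟩ := Nat.exists_eq_add_of_le h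
    exact IsCSStep.append_left (h₂ i (by simp at hi; omega)) l₁

lemma append_singleton {l : List Expr} {e : Expr} (hl : IsCS l)
    (he : (∃ n, e = [SLSym.ss n]) ∨ (∃ a ∈ l, e = eNeg a) ∨
      (∃ c ∈ binSyms, ∃ a ∈ l, ∃ b ∈ l, e = eBin c a b)) : IsCS (l ++ [e]) := by
  have index : ∀ a ∈ l, ∃ j < l.length, (l ++ [e]).getD j [] = a := by
    intro a ha
    obtain ⟨j, hj, rfl⟩ := List.mem_iff_getElem.mp ha
    exact ⟨j, hj, by rw [List.getD_append _ _ _ _ hj, List.getD_eq_getElem _ _ hj]⟩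
  have last : (l ++ [e]).getD l.length [] = e := by simp
  intro i hi
  rcases lt_or_ge i l.length with h | h
  · exact IsCSStep.append_right (hl i h) h [e]
  obtain rfl : i = l.length := by simp at hi; omega
  rcases he with ⟨n, rfl⟩ | ⟨a, ha, rfl⟩ | ⟨c, hc, a, ha, b, hb, rfl⟩
  · exact Or.inl ⟨n, last⟩
  · obtain ⟨j, hj, hja⟩ := index a ha
    exact Or.inr (Or.inl ⟨j, hj, by rw [last, hja]⟩)
  · obtain ⟨j, hj, hja⟩ := index a ha
    obtain ⟨k, hk, hkb⟩ := index b hb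
    exact Or.inr (Or.inr ⟨c, hc, j, hj, k, hk, by rw [last, hja, hkb]⟩)

lemma wff_getD {l : List Expr} (hl : IsCS l) {i : ℕ} (hi : i < l.length) :
    Wff (l.getD i []) := by
  induction i using Nat.strong_induction_on with
  | _ i ih =>
    rcases hl i hi with ⟨n, hn⟩ | ⟨j, hj, he⟩ | ⟨c, hc, j, hj, k, hk, he⟩
    · exact hn ▸ Wff.sym n
    · exact he ▸ (ih j hj (hj.trans hi)).neg
    · exact he ▸ .bin hc (ih j hj (hj.trans hi)) (ih k hk (hk.trans hi))

lemma wff_of_mem {l : List Expr} (hl : IsCS l) {a : Expr} (ha : a ∈ l) : Wff a := by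
  obtain ⟨i, hi, rfl⟩ := List.mem_iff_getElem.mp ha
  rw [← List.getD_eq_getElem _ [] hi]
  exact hl.wff_getD hi

end IsCS

lemma Wff.isWff {a : Expr} (h : Wff a) : IsWff a := by
  induction h with
  | sym n => exact ⟨[[SLSym.ss n]], fun i hi => Or.inl ⟨n, by simp_all⟩, rfl⟩
  | neg _ ih =>
    obtain ⟨l, hl, hlast⟩ := ih
    exact ⟨_, hl.append_singleton (.inr (.inl ⟨_, List.mem_of_getLast? hlast, rfl⟩)),
      by simp⟩
  | @bin c a b hc _ _ iha ihb =>
    obtain ⟨l₁, hl₁, hlast₁⟩ := iha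
    obtain ⟨l₂, hl₂, hlast₂⟩ := ihb
    refine ⟨_, (hl₁.append hl₂).append_singleton (.inr (.inr ⟨c, hc, a, ?_, b, ?_, rfl⟩)),
      by simp⟩
    · exact List.mem_append_left _ (List.mem_of_getLast? hlast₁)
    · exact List.mem_append_right _ (List.mem_of_getLast? hlast₂)

lemma IsWff.wff {a : Expr} (h : IsWff a) : Wff a :=
  let ⟨_, hl, hlast⟩ := h
  hl.wff_of_mem (List.mem_of_getLast? hlast)

lemma isWff_iff_wff {a : Expr} : IsWff a ↔ Wff a := ⟨IsWff.wff, Wff.isWff⟩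

def parenWeight : SLSym → ℤ
  | .lpar => 1
  | .rpar => -1
  | _ => 0

def parenBalance (e : Expr) : ℤ := (e.map parenWeight).sum

@[simp] lemma parenBalance_nil : parenBalance [] = 0 := rfl

@[simp] lemma parenBalance_cons (s : SLSym) (e : Expr) :
    parenBalance (s :: e) = parenWeight s + parenBalance e := by
  simp [parenBalance]

@[simp] lemma parenBalance_append (e f : Expr) :
    parenBalance (e ++ f) = parenBalance e + parenBalance f := by
  simp [parenBalance]

def HasNonnegPrefixBalance (e : Expr) : Prop := ∀ k, 0 ≤ parenBalance (e.take k)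

lemma HasNonnegPrefixBalance.cons {e : Expr} (h : HasNonnegPrefixBalance e) {s : SLSym}
    (hs : 0 ≤ parenWeight s) : HasNonnegPrefixBalance (s :: e) := by
  rintro (_ | k)
  · simp
  · simpa using add_nonneg hs (h k)

lemma HasNonnegPrefixBalance.append {e f : Expr} (he : HasNonnegPrefixBalance e)
    (hf : HasNonnegPrefixBalance f) (he₀ : 0 ≤ parenBalance e) :
    HasNonnegPrefixBalance (e ++ f) := by
  intro k
  rw [List.take_append, parenBalance_append]
  rcases le_or_gt k e.length with h | h
  · simpa [Nat.sub_eq_zero_of_le h] using he k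
  · simpa [List.take_of_length_le h.le] using add_nonneg he₀ (hf _)

lemma parenBalance_take_pos_of_parenthesized {m : Expr} (hm : HasNonnegPrefixBalance m) {k : ℕ}
    (hk₀ : 0 < k) (hk : k < m.length + 2) :
    0 < parenBalance ((SLSym.lpar :: m ++ [SLSym.rpar]).take k) := by
  obtain ⟨k, rfl⟩ := Nat.exists_eq_add_of_lt hk₀
  rw [List.take_append, List.length_cons, Nat.sub_eq_zero_of_le (by omega)]
  have := hm k
  simp only [zero_add, List.take_succ_cons, List.take_zero, List.append_nil, parenBalance_cons,
    parenWeight]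
  omega

lemma parenWeight_eq_zero_of_mem_binSyms {c : SLSym} (hc : c ∈ binSyms) :
    parenWeight c = 0 := by
  fin_cases hc <;> rfl

lemma Wff.parenBalance_eq_zero {a : Expr} (h : Wff a) : parenBalance a = 0 := by
  induction h with
  | sym n => rfl
  | neg _ ih => simp [eNeg, parenWeight, ih]
  | bin hc _ _ iha ihb =>
    simp [eBin, iha, ihb, parenWeight_eq_zero_of_mem_binSyms hc, parenWeight.eq_1,
      parenWeight.eq_2]

lemma hasNonnegPrefixBalance_of_take_pos {a : Expr} (h₀ : parenBalance a = 0)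
    (hpos : ∀ k, 0 < k → k < a.length → 0 < parenBalance (a.take k)) :
    HasNonnegPrefixBalance a := by
  intro k
  rcases Nat.eq_zero_or_pos k with rfl | hk₀
  · simp
  rcases lt_or_ge k a.length with hk | hk
  · exact (hpos k hk₀ hk).le
  · rw [List.take_of_length_le hk, h₀]

lemma Wff.parenBalance_take_pos {a : Expr} (h : Wff a) {k : ℕ} (hk₀ : 0 < k)
    (hk : k < a.length) : 0 < parenBalance (a.take k) := by
  induction h generalizing k with
  | sym n => simp at hk; omega
  -- `eNeg a` and `eBin c a b` are `lpar :: m ++ [rpar]` with `m = neg :: a`, resp. `a ++ c :: b`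
  | @neg a ha ih =>
    have hm : HasNonnegPrefixBalance (SLSym.neg :: a) :=
      (hasNonnegPrefixBalance_of_take_pos ha.parenBalance_eq_zero @ih).cons le_rfl
    exact parenBalance_take_pos_of_parenthesized hm hk₀ (by simp [eNeg] at hk ⊢; omega)
  | @bin c a b hc ha hb iha ihb =>
    have hm : HasNonnegPrefixBalance (a ++ c :: b) :=
      (hasNonnegPrefixBalance_of_take_pos ha.parenBalance_eq_zero @iha).append
        ((hasNonnegPrefixBalance_of_take_pos hb.parenBalance_eq_zero @ihb).cons
          (parenWeight_eq_zero_of_mem_binSyms hc).ge) ha.parenBalance_eq_zero.ge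
    exact parenBalance_take_pos_of_parenthesized hm hk₀ (by simp [eBin] at hk ⊢; omega)

lemma Wff.eq_of_prefix {a b : Expr} (ha : Wff a) (hb : Wff b) (hab : a <+: b) : a = b := by
  refine hab.eq_of_length (le_antisymm hab.length_le (not_lt.mp fun hlt => ?_))
  have hpos := hb.parenBalance_take_pos (List.length_pos_iff.mpr ha.ne_nil) hlt
  rw [← List.prefix_iff_eq_take.mp hab, ha.parenBalance_eq_zero] at hpos
  exact hpos.false

lemma Wff.eBin_inj {a a' b b' : Expr} {c c' : SLSym} (ha : Wff a) (ha' : Wff a')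
    (h : eBin c a b = eBin c' a' b') : a = a' ∧ c = c' ∧ b = b' := by
  have hbody : a ++ c :: b = a' ++ c' :: b' :=
    List.cons_injective (List.append_cancel_right h)
  have hpre : a <+: a' ++ c' :: b' := hbody ▸ List.prefix_append a (c :: b)
  obtain rfl : a = a' := by
    rcases List.prefix_or_prefix_of_prefix hpre (List.prefix_append a' (c' :: b')) with h | h
    · exact ha.eq_of_prefix ha' h
    · exact (ha'.eq_of_prefix ha h).symm
  obtain ⟨rfl, rfl⟩ := List.cons_eq_cons.mp (List.append_cancel_left hbody)
  exact ⟨rfl, rfl, rfl⟩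

lemma Wff.eNeg_ne_eBin {a' : Expr} (ha' : Wff a') (a b' : Expr) (c : SLSym) :
    eNeg a ≠ eBin c a' b' := by
  cases ha' <;> simp [eNeg, eBin]

lemma eNeg_injective : Function.Injective eNeg := fun a b h => by
  simpa [eNeg] using h

lemma mem_Sbar_iff {S : Set ℕ} {a : Expr} :
    a ∈ Sbar S ↔ Wff a ∧ ∀ n, SLSym.ss n ∈ a → n ∈ S :=
  isWff_iff_wff.and Iff.rfl

lemma Wff.of_mem_Sbar {S : Set ℕ} {a : Expr} (ha : a ∈ Sbar S) : Wff a :=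
  (mem_Sbar_iff.mp ha).1

lemma ss_mem_eNeg_iff {n : ℕ} {a : Expr} : SLSym.ss n ∈ eNeg a ↔ SLSym.ss n ∈ a := by
  simp [eNeg]

lemma ss_mem_eBin_iff {n : ℕ} {c : SLSym} (hc : c ∈ binSyms) {a b : Expr} :
    SLSym.ss n ∈ eBin c a b ↔ SLSym.ss n ∈ a ∨ SLSym.ss n ∈ b := by
  fin_cases hc <;> simp [eBin]

lemma Sexprs_subset_Sbar (S : Set ℕ) : Sexprs S ⊆ Sbar S := by
  rintro _ ⟨n, hn, rfl⟩
  exact mem_Sbar_iff.mpr ⟨.sym n, by simpa using hn⟩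

lemma opClosed_Sbar (S : Set ℕ) : OpClosed (Sbar S) := by
  constructor
  · intro a ha
    obtain ⟨hw, hS⟩ := mem_Sbar_iff.mp ha
    exact mem_Sbar_iff.mpr ⟨hw.neg, fun n hn => hS n (ss_mem_eNeg_iff.mp hn)⟩
  · intro c hc a ha b hb
    obtain ⟨hwa, hSa⟩ := mem_Sbar_iff.mp ha
    obtain ⟨hwb, hSb⟩ := mem_Sbar_iff.mp hb
    refine mem_Sbar_iff.mpr ⟨.bin hc hwa hwb, fun n hn => ?_⟩
    exact ((ss_mem_eBin_iff hc).mp hn).elim (hSa n) (hSb n)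

lemma Sbar_subset_of_opClosed {S : Set ℕ} {D : Set Expr} (hS : Sexprs S ⊆ D)
    (hD : OpClosed D) : Sbar S ⊆ D := by
  intro a ha
  obtain ⟨hw, haS⟩ := mem_Sbar_iff.mp ha
  clear ha
  induction hw with
  | sym n => exact hS ⟨n, haS n (by simp), rfl⟩
  | neg _ ih => exact hD.1 _ (ih fun n hn => haS n (ss_mem_eNeg_iff.mpr hn))
  | bin hc _ _ iha ihb =>
    exact hD.2 _ hc _ (iha fun n hn => haS n ((ss_mem_eBin_iff hc).mpr (.inl hn)))
      _ (ihb fun n hn => haS n ((ss_mem_eBin_iff hc).mpr (.inr hn)))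

theorem Sbar_freely_generated (S : Set ℕ) :
    -- `S̄` is the smallest subset of the set of all expressions containing `S`
    -- and closed under the five formula-building operations:
    (Sexprs S ⊆ Sbar S) ∧ OpClosed (Sbar S) ∧
    (∀ D : Set Expr, Sexprs S ⊆ D → OpClosed D → Sbar S ⊆ D) ∧
    -- each operation is injective on `S̄`:
    (∀ a ∈ Sbar S, ∀ b ∈ Sbar S, eNeg a = eNeg b → a = b) ∧
    (∀ c ∈ binSyms, ∀ a ∈ Sbar S, ∀ b ∈ Sbar S, ∀ a' ∈ Sbar S, ∀ b' ∈ Sbar S,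
      eBin c a b = eBin c a' b' → a = a' ∧ b = b') ∧
    -- ranges of distinct operations on `S̄` are pairwise disjoint:
    (∀ c ∈ binSyms, ∀ a ∈ Sbar S, ∀ a' ∈ Sbar S, ∀ b' ∈ Sbar S,
      eNeg a ≠ eBin c a' b') ∧
    (∀ c ∈ binSyms, ∀ c' ∈ binSyms, c ≠ c' →
      ∀ a ∈ Sbar S, ∀ b ∈ Sbar S, ∀ a' ∈ Sbar S, ∀ b' ∈ Sbar S,
        eBin c a b ≠ eBin c' a' b') ∧
    -- ranges on `S̄` are disjoint from `S`:
    (∀ a ∈ Sbar S, eNeg a ∉ Sexprs S) ∧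
    (∀ c ∈ binSyms, ∀ a ∈ Sbar S, ∀ b ∈ Sbar S, eBin c a b ∉ Sexprs S) := by
  refine ⟨Sexprs_subset_Sbar S, opClosed_Sbar S, fun _ => Sbar_subset_of_opClosed,
    fun a _ b _ h => eNeg_injective h, ?_, ?_, ?_, ?_, ?_⟩
  · intro c _ a ha b _ a' ha' b' _ h
    obtain ⟨haa', -, hbb'⟩ := (Wff.of_mem_Sbar ha).eBin_inj (Wff.of_mem_Sbar ha') h
    exact ⟨haa', hbb'⟩
  · intro c _ a _ a' ha' b' _
    exact (Wff.of_mem_Sbar ha').eNeg_ne_eBin a b' c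
  · intro c _ c' _ hcc' a ha b _ a' ha' b' _ h
    exact hcc' ((Wff.of_mem_Sbar ha).eBin_inj (Wff.of_mem_Sbar ha') h).2.1
  · rintro a _ ⟨n, _, h⟩
    simp [eNeg] at h
  · rintro c _ a _ b _ ⟨n, _, h⟩
    simp [eBin] at h
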